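/- With the same setup (G a group, P self-normalizing, Γ ≤ G, g ∈ G), the map Ξ from double cosets Γ_P y Γ_P ⊆ ΓgΓ ∩ P to Γ[g]-conjugacy classes of subgroups Q such that Q is Γ-conjugate to P and gQg⁻¹ is Γ-conjugate to P, defined by Ξ(Γ_P y Γ_P) = class of γ₁Pγ₁⁻¹ for y = γ₂gγ₁, is injective. -/

import Mathlib

/-- Conjugated subgroup `g H g⁻¹`. -/
def conjSub {G : Type*} [Group G] (g : G) (H : Subgroup G) : Subgroup G :=
  H.map (MulAut.conj g).toMonoidHom

/-- `Γ[g] = Γ ∩ g⁻¹ Γ g`. -/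
def heckeSubgroup {G : Type*} [Group G] (Γ : Subgroup G) (g : G) : Subgroup G :=
  Γ ⊓ Γ.map (MulAut.conj g⁻¹).toMonoidHom

lemma conjSub_conjSub {G : Type*} [Group G] (a b : G) (H : Subgroup G) :
    conjSub a (conjSub b H) = conjSub (a * b) H := by
  simp only [conjSub, Subgroup.map_map]
  congr 1
  ext x
  simp [mul_assoc]

lemma mem_conjSub {G : Type*} [Group G] (a x : G) (H : Subgroup G) :
    x ∈ conjSub a H ↔ a⁻¹ * x * a ∈ H := by
  constructor
  · rintro ⟨z, hz, rfl⟩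
    simpa [mul_assoc] using hz
  · intro hx
    refine ⟨a⁻¹ * x * a, hx, ?_⟩
    simp [mul_assoc]

lemma conjSub_one {G : Type*} [Group G] (H : Subgroup G) : conjSub 1 H = H := by
  ext x; simp [mem_conjSub]

lemma mem_of_conjSub_eq {G : Type*} [Group G] {x : G} {H : Subgroup G}
    (hH : Subgroup.normalizer (H : Set G) = H) (h : conjSub x H = H) : x ∈ H := by
  rw [← hH, Subgroup.mem_normalizer_iff]
  intro z
  constructor
  · intro hz
    rw [← h, mem_conjSub]
    simpa [mul_assoc] using hz
  · intro hz
    rw [← h, mem_conjSub] at hz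
    simpa [mul_assoc] using hz


/-- Injectivity of the map `Ξ`: if `y = γ₂ g γ₁` and `y' = γ₂' g γ₁'` lie in `P`
and the subgroups `γ₁ P γ₁⁻¹` and `γ₁' P γ₁'⁻¹` are `Γ[g]`-conjugate, then
`y` and `y'` lie in the same `Γ_P`-double coset. -/
theorem stmt2 {G : Type*} [Group G] (P Γ : Subgroup G) (hP : Subgroup.normalizer (P : Set G) = P)
    (g γ₁ γ₂ γ₁' γ₂' : G)
    (h1 : γ₁ ∈ Γ) (h2 : γ₂ ∈ Γ) (h1' : γ₁' ∈ Γ) (h2' : γ₂' ∈ Γ)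
    (y y' : G) (hy : y = γ₂ * g * γ₁) (hy' : y' = γ₂' * g * γ₁')
    (hyP : y ∈ P) (hy'P : y' ∈ P)
    (hconj : ∃ h ∈ heckeSubgroup Γ g, conjSub γ₁ P = conjSub h (conjSub γ₁' P)) :
    ∃ a ∈ Γ ⊓ P, ∃ b ∈ Γ ⊓ P, y = a * y' * b := by
  obtain ⟨h, hh, hc⟩ := hconj
  obtain ⟨hhΓ, δ, hδΓ, hδ⟩ := hh
  -- h = g⁻¹ δ g
  have hδeq : h = g⁻¹ * δ * g := by
    simpa [mul_assoc] using hδ.symm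
  set u : G := γ₁⁻¹ * h * γ₁' with hu
  have huP : u ∈ P := by
    apply mem_of_conjSub_eq hP
    rw [conjSub_conjSub] at hc
    have : conjSub γ₁⁻¹ (conjSub γ₁ P) = conjSub γ₁⁻¹ (conjSub (h * γ₁') P) := by rw [hc]
    rw [conjSub_conjSub, conjSub_conjSub] at this
    rw [inv_mul_cancel, conjSub_one] at this
    simpa [hu, mul_assoc] using this.symm
  have huΓ : u ∈ Γ := Subgroup.mul_mem _ (Subgroup.mul_mem _ (Subgroup.inv_mem _ h1) hhΓ) h1'
  refine ⟨y * u * y'⁻¹, ⟨?_, by exact Subgroup.mul_mem _ (Subgroup.mul_mem _ hyP huP) (Subgroup.inv_mem _ hy'P)⟩,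
    u⁻¹, ⟨Subgroup.inv_mem _ huΓ, Subgroup.inv_mem _ huP⟩, by group⟩
  -- y * u * y'⁻¹ = γ₂ δ γ₂'⁻¹ ∈ Γ
  have : y * u * y'⁻¹ = γ₂ * δ * γ₂'⁻¹ := by
    rw [hy, hy', hu, hδeq]; group
  rw [this]
  exact Subgroup.mul_mem _ (Subgroup.mul_mem _ h2 hδΓ) (Subgroup.inv_mem _ h2')
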